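/- Fix l, h with h ≤ l and a correct key k* : Fin l → Bool. Then the number of pairs (i,k) of l-bit words such that exactly one of HD(i,k*) = h and HD(i,k) = h holds equals 2·C(l,h)·(2^l − C(l,h)); consequently the functional corruptibility of SFLL-HD, namely this count divided by 2^(2l), equals C(l,h)·(2^l − C(l,h))/2^(2l−1). -/

import Mathlib

/-- Hamming distance between `l`-bit words. -/
def HD {l : ℕ} (a b : Fin l → Bool) : ℕ :=
  (Finset.univ.filter (fun j => a j ≠ b j)).card

/-!
For a fixed input `i`, the keys `k` with `HD i k = h` form a Hamming sphere of size `C(l,h)`,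
whichever `i` is. So an input on the sphere around `k*` (there are `C(l,h)` of them) errs exactly
for the `2^l − C(l,h)` keys off its own sphere, and any other input (`2^l − C(l,h)` of them)
errs exactly for the `C(l,h)` keys on it: in total `2·C(l,h)·(2^l − C(l,h))` erring pairs.
-/

open Finset

theorem card_filter_not_eq_card_sub {α : Type*} [Fintype α] (P : α → Prop) [DecidablePred P] :
    #{i | ¬P i} = Fintype.card α - #{i | P i} := by
  classical
  rw [filter_not, card_sdiff_of_subset (filter_subset _ _), card_univ]

theorem card_filter_xor_eq_of_card_fiber {α β : Type*} [Fintype α] [Fintype β]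
    (P : α → Prop) (R : α → β → Prop) [DecidablePred P] [∀ i, DecidablePred (R i)]
    (c : ℕ) (hR : ∀ i, #{k | R i k} = c) :
    #{p : α × β | Xor (P p.1) (R p.1 p.2)} =
      #{i | P i} * (Fintype.card β - c) + (Fintype.card α - #{i | P i}) * c := by
  have fiber (i : α) : #{k | Xor (P i) (R i k)} = if P i then Fintype.card β - c else c := by
    by_cases hP : P i
    · simp only [hP, xor_true, card_filter_not_eq_card_sub, hR, ↓reduceIte]
    · simp only [hP, xor_false, id_eq, hR, ↓reduceIte]
  calc #{p : α × β | Xor (P p.1) (R p.1 p.2)} = ∑ i, #{k | Xor (P i) (R i k)} := by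
        rw [card_filter, ← univ_product_univ, sum_product]
        simp only [card_filter]
    _ = _ := by simp only [fiber, sum_ite, sum_const, smul_eq_mul, card_filter_not_eq_card_sub]

theorem card_filter_hammingDist_eq {ι : Type*} [Fintype ι] [DecidableEq ι] (a : ι → Bool)
    (h : ℕ) : #{b | hammingDist a b = h} = (Fintype.card ι).choose h := by
  rw [← card_univ, ← card_powersetCard]
  refine card_nbij' (fun b => ({j | a j ≠ b j} : Finset ι))
    (fun s j => if j ∈ s then !a j else a j) ?_ ?_ ?_ ?_
  · intro b hb
    simpa [hammingDist] using hb
  · intro s hs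
    rw [mem_coe, mem_powersetCard] at hs
    simpa [hammingDist] using hs.2
  · intro b _
    funext j
    by_cases hj : a j = b j <;> simp [hj, Bool.eq_not_iff]
  · intro s _
    ext j
    by_cases hj : j ∈ s <;> simp [hj]

theorem two_mul_mul_sub_div_two_pow (l n : ℕ) (hn : n ≤ 2 ^ l) :
    ((2 * n * (2 ^ l - n) : ℕ) : ℚ) / 2 ^ (2 * l) = n * (2 ^ l - n) / 2 ^ (2 * l - 1) := by
  push_cast [hn]
  rcases l with _ | l
  -- `2 * 0 - 1` truncates to `0`; both sides vanish anyway since `n ≤ 1`.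
  · interval_cases n <;> norm_num
  · rw [show 2 * (l + 1) - 1 = 2 * l + 1 by omega, show 2 * (l + 1) = 2 * l + 1 + 1 by ring,
      pow_succ]
    field_simp
    ring

theorem HD_comm {l : ℕ} (a b : Fin l → Bool) : HD a b = HD b a := hammingDist_comm a b

theorem sfll_hd_functional_corruptibility_general {l : ℕ} (h : ℕ)
    (kstar : Fin l → Bool) :
    ((Finset.univ.filter (fun p : (Fin l → Bool) × (Fin l → Bool) =>
        Xor (HD p.1 kstar = h) (HD p.1 p.2 = h))).card
      = 2 * l.choose h * (2 ^ l - l.choose h)) ∧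
    (((Finset.univ.filter (fun p : (Fin l → Bool) × (Fin l → Bool) =>
        Xor (HD p.1 kstar = h) (HD p.1 p.2 = h))).card : ℚ) / 2 ^ (2 * l)
      = (l.choose h : ℚ) * (2 ^ l - (l.choose h : ℚ)) / 2 ^ (2 * l - 1)) := by
  have sphere (a : Fin l → Bool) : #{b | HD a b = h} = l.choose h :=
    (card_filter_hammingDist_eq a h).trans (by rw [Fintype.card_fin])
  have sphere_kstar : #{i | HD i kstar = h} = l.choose h := by
    simpa only [HD_comm _ kstar] using sphere kstar
  have count : #{p : (Fin l → Bool) × (Fin l → Bool) | Xor (HD p.1 kstar = h) (HD p.1 p.2 = h)}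
      = 2 * l.choose h * (2 ^ l - l.choose h) := by
    rw [card_filter_xor_eq_of_card_fiber (fun i => HD i kstar = h) (fun i k => HD i k = h) _
      sphere, sphere_kstar]
    simp only [Fintype.card_fun, Fintype.card_bool, Fintype.card_fin]
    ring
  refine ⟨count, ?_⟩
  rw [count]
  exact two_mul_mul_sub_div_two_pow l _ (Nat.choose_le_two_pow l h)

/-- SFLL-HD functional corruptibility: the number of erring pairs `(i,k)` of `l`-bit
words equals `2·C(l,h)·(2^l − C(l,h))`, hence
`E_FC = C(l,h)·(2^l − C(l,h)) / 2^(2l−1)`. -/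
theorem sfll_hd_functional_corruptibility {l : ℕ} (h : ℕ) (hh : h ≤ l)
    (kstar : Fin l → Bool) :
    ((Finset.univ.filter (fun p : (Fin l → Bool) × (Fin l → Bool) =>
        Xor (HD p.1 kstar = h) (HD p.1 p.2 = h))).card
      = 2 * l.choose h * (2 ^ l - l.choose h)) ∧
    (((Finset.univ.filter (fun p : (Fin l → Bool) × (Fin l → Bool) =>
        Xor (HD p.1 kstar = h) (HD p.1 p.2 = h))).card : ℚ) / 2 ^ (2 * l)
      = (l.choose h : ℚ) * (2 ^ l - (l.choose h : ℚ)) / 2 ^ (2 * l - 1)) :=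
  sfll_hd_functional_corruptibility_general h kstar
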